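/- arXiv:2505.22376 — 4 statements merged into one kernel-verified Lean document; each statement's English description precedes it below -/
import Mathlib

section
/- Let n ≥ 1 and let U ∈ Matrix (Fin n) (Fin n) ℤ be an integer matrix whose entries have no common divisor, i.e., the greatest common divisor of all entries of U is 1. Then there exists a vector v ∈ Fin n → ℤ such that U.mulVec v is a primitive vector, i.e., the greatest common divisor of the entries of U.mulVec v is 1. -/
/-- Any linear functional value is divisible by the gcd of the coordinates. -/
lemma gcd_dvd_linearMap_apply {n : ℕ} (y : Fin n → ℤ) (φ : (Fin n → ℤ) →ₗ[ℤ] ℤ) :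
    (Finset.univ.gcd y) ∣ φ y := by
  have hy : y = ∑ i, Pi.single i (y i) := (Finset.univ_sum_single y).symm
  have h : ∀ i, (Pi.single i (y i) : Fin n → ℤ) = y i • Pi.single i (1 : ℤ) := by
    intro i
    ext j
    by_cases hj : i = j <;> simp [Pi.single_apply, hj]
  have hφ : φ y = ∑ i, y i * φ (Pi.single i (1 : ℤ)) := by
    conv_lhs => rw [hy]
    rw [map_sum]
    exact Finset.sum_congr rfl fun i _ => by rw [h i, map_smul, smul_eq_mul]
  rw [hφ]
  exact Finset.dvd_sum fun i _ =>
    dvd_mul_of_dvd_left (Finset.gcd_dvd (Finset.mem_univ i)) _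

/-- If the entries of an integer matrix `U` have no common divisor (their gcd is `1`),
then some vector in the image of `U` is primitive (the gcd of its entries is `1`). -/
theorem exists_primitive_vector_in_image {n : ℕ} (hn : 1 ≤ n)
    (U : Matrix (Fin n) (Fin n) ℤ)
    (hU : Finset.univ.gcd (fun p : Fin n × Fin n => U p.1 p.2) = 1) :
    ∃ v : Fin n → ℤ, Finset.univ.gcd (fun i => U.mulVec v i) = 1 := by
  classical
  set L : Submodule ℤ (Fin n → ℤ) := LinearMap.range U.mulVecLin with hLdef
  obtain ⟨m, bM, bN, f, a, hsnf⟩ := L.smithNormalForm (Pi.basisFun ℤ (Fin n))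
  -- the candidate vector in L
  set x : Fin n → ℤ := ((∑ i, bN i : L) : Fin n → ℤ) with hxdef
  have hxL : x ∈ L := (∑ i, bN i : L).2
  obtain ⟨v, hv⟩ := LinearMap.mem_range.mp hxL
  have hv' : U.mulVec v = x := by rw [← hv]; rfl
  refine ⟨v, ?_⟩
  have hgoal : Finset.univ.gcd (fun i => U.mulVec v i) = Finset.univ.gcd x := by
    rw [hv']
  rw [hgoal]
  set g : ℤ := Finset.univ.gcd x with hg
  -- x as a sum
  have hx : x = ∑ i, a i • bM (f i) := by
    rw [hxdef, Submodule.coe_sum]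
    exact Finset.sum_congr rfl fun i _ => hsnf i
  -- g divides each a k
  have hga : ∀ k, g ∣ a k := by
    intro k
    have h1 : bM.coord (f k) x = a k := by
      rw [hx, map_sum]
      rw [Finset.sum_eq_single k]
      · rw [map_smul, Module.Basis.coord_apply, Module.Basis.repr_self, smul_eq_mul,
          Finsupp.single_eq_same, mul_one]
      · intro i _ hik
        rw [map_smul, Module.Basis.coord_apply, Module.Basis.repr_self, smul_eq_mul,
          Finsupp.single_eq_of_ne' (fun h => hik (f.injective h)), mul_zero]
      · intro h; exact absurd (Finset.mem_univ k) h
    rw [← h1]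
    exact gcd_dvd_linearMap_apply x (bM.coord (f k))
  -- gcd of a divides each entry of U
  have haU : ∀ i j, Finset.univ.gcd a ∣ U i j := by
    intro i j
    have hcol : U.mulVec (Pi.single j 1) ∈ L := ⟨Pi.single j 1, rfl⟩
    obtain ⟨c, hc⟩ := (Module.Basis.mem_submodule_iff' bN).mp hcol
    have hUij : U i j = ∑ k, c k * (a k * bM (f k) i) := by
      have := congrFun hc i
      rw [Matrix.mulVec_single] at this
      simp only [MulOpposite.op_one, one_smul, Matrix.col_apply, mul_one] at this
      rw [this, Finset.sum_apply]
      refine Finset.sum_congr rfl fun k _ => ?_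
      rw [hsnf k]
      simp [mul_assoc]
    rw [hUij]
    refine Finset.dvd_sum fun k _ => ?_
    exact Dvd.dvd.mul_left
      (Dvd.dvd.mul_right (Finset.gcd_dvd (Finset.mem_univ k)) _) _
  -- hence gcd a divides 1
  have ha1 : Finset.univ.gcd a ∣ 1 := by
    rw [← hU]
    exact Finset.dvd_gcd fun p _ => haU p.1 p.2
  have hg1 : g ∣ 1 := dvd_trans (Finset.dvd_gcd fun k _ => hga k) ha1
  rcases Int.isUnit_iff.mp (isUnit_of_dvd_one hg1) with h | h
  · exact h
  · exfalso
    have hnorm : normalize g = g := Finset.normalize_gcd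
    have hnn : 0 ≤ g := Int.nonneg_of_normalize_eq_self hnorm
    omega
end

section
/- For every n ∈ ℕ and every A ∈ Matrix (Fin n) (Fin n) ℤ, there exist k ∈ ℕ, natural numbers n₁, …, n_k ≥ 1, and matrices A₁ ∈ Matrix (Fin n₁) (Fin n₁) ℤ, …, A_k ∈ Matrix (Fin n_k) (Fin n_k) ℤ, each of whose characteristic polynomials has irreducible image in ℚ[X], such that in U(ℤ) one has [A] = [A₁] + ⋯ + [A_k]. -/
open Matrix

/-- The index set: pairs of a size `n` and an `n × n` integer matrix. -/
abbrev MatIdx : Type := Σ n : ℕ, Matrix (Fin n) (Fin n) ℤ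

/-- The relations defining the group `U(ℤ)`:
(i) `[A] = [B] + [D]` whenever `A` is the block matrix `fromBlocks B C 0 D`;
(ii) `[U * A * U⁻¹] = [A]` for `U ∈ GL(n, ℤ)`. -/
def UZrels : Set (FreeAbelianGroup MatIdx) :=
  {x |
    (∃ (n m : ℕ) (B : Matrix (Fin n) (Fin n) ℤ) (C : Matrix (Fin n) (Fin m) ℤ)
        (D : Matrix (Fin m) (Fin m) ℤ),
      x = FreeAbelianGroup.of
            ⟨n + m, (Matrix.reindex finSumFinEquiv finSumFinEquiv) (Matrix.fromBlocks B C 0 D)⟩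
          - FreeAbelianGroup.of ⟨n, B⟩ - FreeAbelianGroup.of ⟨m, D⟩) ∨
    (∃ (n : ℕ) (A : Matrix (Fin n) (Fin n) ℤ) (U : GL (Fin n) ℤ),
      x = FreeAbelianGroup.of
            ⟨n, (U : Matrix (Fin n) (Fin n) ℤ) * A * ((↑(U⁻¹) : Matrix (Fin n) (Fin n) ℤ))⟩
          - FreeAbelianGroup.of ⟨n, A⟩)}

/-- The group `U(ℤ)`: the free abelian group on all square integer matrices modulo
the subgroup generated by the relations. -/
abbrev UZ : Type := FreeAbelianGroup MatIdx ⧸ AddSubgroup.closure UZrels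

/-- The class `[A] ∈ U(ℤ)` of a square integer matrix `A`. -/
def UZ.cls {n : ℕ} (A : Matrix (Fin n) (Fin n) ℤ) : UZ :=
  QuotientAddGroup.mk (FreeAbelianGroup.of ⟨n, A⟩)

lemma UZ.cls_sub_mem {n m : ℕ} (A : Matrix (Fin n) (Fin n) ℤ) (B : Matrix (Fin m) (Fin m) ℤ)
    (h : FreeAbelianGroup.of (⟨n, A⟩ : MatIdx) - FreeAbelianGroup.of (⟨m, B⟩ : MatIdx)
      ∈ AddSubgroup.closure UZrels) : UZ.cls A = UZ.cls B := by
  rw [UZ.cls, UZ.cls, QuotientAddGroup.eq]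
  have := (AddSubgroup.closure UZrels).neg_mem h
  simpa [neg_sub, sub_eq_neg_add] using this

lemma UZ.cls_conj {n : ℕ} (U : GL (Fin n) ℤ) (A : Matrix (Fin n) (Fin n) ℤ) :
    UZ.cls ((U : Matrix (Fin n) (Fin n) ℤ) * A * ((↑(U⁻¹) : Matrix (Fin n) (Fin n) ℤ)))
      = UZ.cls A := by
  apply UZ.cls_sub_mem
  exact AddSubgroup.subset_closure (Or.inr ⟨n, A, U, rfl⟩)

lemma UZ.cls_blocks {n m : ℕ} (B : Matrix (Fin n) (Fin n) ℤ) (C : Matrix (Fin n) (Fin m) ℤ)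
    (D : Matrix (Fin m) (Fin m) ℤ) :
    UZ.cls ((Matrix.reindex finSumFinEquiv finSumFinEquiv) (Matrix.fromBlocks B C 0 D))
      = UZ.cls B + UZ.cls D := by
  rw [UZ.cls, UZ.cls, UZ.cls]
  rw [show ((QuotientAddGroup.mk (FreeAbelianGroup.of (⟨n, B⟩ : MatIdx)) : UZ) +
      QuotientAddGroup.mk (FreeAbelianGroup.of (⟨m, D⟩ : MatIdx)))
    = QuotientAddGroup.mk (FreeAbelianGroup.of (⟨n, B⟩ : MatIdx)
        + FreeAbelianGroup.of (⟨m, D⟩ : MatIdx)) from rfl]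
  rw [QuotientAddGroup.eq]
  have h : FreeAbelianGroup.of
        (⟨n + m, (Matrix.reindex finSumFinEquiv finSumFinEquiv) (Matrix.fromBlocks B C 0 D)⟩ : MatIdx)
      - FreeAbelianGroup.of (⟨n, B⟩ : MatIdx) - FreeAbelianGroup.of (⟨m, D⟩ : MatIdx)
      ∈ AddSubgroup.closure UZrels :=
    AddSubgroup.subset_closure (Or.inl ⟨n, m, B, C, D, rfl⟩)
  have := (AddSubgroup.closure UZrels).neg_mem h
  convert this using 1
  abel

lemma UZ.cls_zero_dim (A : Matrix (Fin 0) (Fin 0) ℤ) : UZ.cls A = 0 := by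
  have h := UZ.cls_blocks (n := 0) (m := 0) A 0 A
  have e1 : ((Matrix.reindex finSumFinEquiv finSumFinEquiv) (Matrix.fromBlocks A 0 0 A)
      : Matrix (Fin (0+0)) (Fin (0+0)) ℤ) = A := by
    ext i _; exact absurd i.2 (by simp)
  rw [e1] at h
  have hA : UZ.cls A = UZ.cls A + UZ.cls A := h
  have : UZ.cls A + 0 = UZ.cls A + UZ.cls A := by rw [add_zero, ← hA]
  exact (add_left_cancel this).symm

lemma UZ.cls_reindex {m n : ℕ} (h : m = n) (A : Matrix (Fin m) (Fin m) ℤ) :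
    UZ.cls ((Matrix.reindex (finCongr h) (finCongr h)) A) = UZ.cls A := by
  subst h; simp

lemma UZ.cls_eq_of_invariant {n : ℕ} (A : Matrix (Fin n) (Fin n) ℤ)
    (W : Submodule ℤ (Fin n → ℤ))
    (hinv : ∀ x ∈ W, A.mulVec x ∈ W)
    (hsat : ∀ (c : ℤ) (x : Fin n → ℤ), c ≠ 0 → c • x ∈ W → x ∈ W) :
    ∃ (r m : ℕ) (_ : r + m = n) (B : Matrix (Fin r) (Fin r) ℤ)
      (D : Matrix (Fin m) (Fin m) ℤ),
      r = Module.finrank ℤ W ∧ UZ.cls A = UZ.cls B + UZ.cls D := by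
  classical
  -- the quotient is finite and torsion-free, hence free
  let Q := (Fin n → ℤ) ⧸ W
  have htf : NoZeroSMulDivisors ℤ Q := by
    constructor
    rintro c q hcq
    by_contra hne
    push_neg at hne
    obtain ⟨hc, hq⟩ := hne
    obtain ⟨x, rfl⟩ := W.mkQ_surjective q
    apply hq
    have h1 : W.mkQ (c • x) = 0 := by rw [_root_.map_smul]; exact hcq
    have h2 : c • x ∈ W := (Submodule.Quotient.mk_eq_zero W).1 h1
    have h3 := hsat c x hc h2
    exact (Submodule.Quotient.mk_eq_zero W).2 h3
  have : Module.Free ℤ Q := Module.free_of_finite_type_torsion_free'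
  -- splitting
  obtain ⟨s, hs⟩ := Module.projective_lifting_property W.mkQ (LinearMap.id)
    (W.mkQ_surjective)
  have hs' : ∀ q : Q, W.mkQ (s q) = q := fun q => LinearMap.congr_fun hs q
  -- the equivalence (Fin n → ℤ) ≃ W × Q
  have hker : ∀ x : Fin n → ℤ, x - s (W.mkQ x) ∈ W := by
    intro x
    have h₂ : W.mkQ (x - s (W.mkQ x)) = 0 := by rw [map_sub, hs', sub_self]
    exact (Submodule.Quotient.mk_eq_zero W).1 h₂
  let e : (Fin n → ℤ) ≃ₗ[ℤ] W × Q :=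
    { toFun := fun x => (⟨x - s (W.mkQ x), hker x⟩, W.mkQ x)
      map_add' := by
        intro x y
        refine Prod.ext (Subtype.ext ?_) ?_
        · show (x + y) - s (W.mkQ (x + y)) = (x - s (W.mkQ x)) + (y - s (W.mkQ y))
          rw [map_add, map_add, add_sub_add_comm]
        · show W.mkQ (x + y) = W.mkQ x + W.mkQ y
          rw [map_add]
      map_smul' := by
        intro c x
        refine Prod.ext (Subtype.ext ?_) ?_
        · show (c • x) - s (W.mkQ (c • x)) = c • (x - s (W.mkQ x))
          rw [_root_.map_smul, _root_.map_smul, smul_sub]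
        · show W.mkQ (c • x) = c • W.mkQ x
          rw [_root_.map_smul]
      invFun := fun p => (p.1 : Fin n → ℤ) + s p.2
      left_inv := by intro x; simp
      right_inv := by
        rintro ⟨w, q⟩
        have h1 : W.mkQ ((w : Fin n → ℤ) + s q) = q := by
          have hw0 : W.mkQ (w : Fin n → ℤ) = 0 := (Submodule.Quotient.mk_eq_zero W).2 w.2
          rw [map_add, hs', hw0, zero_add]
        refine Prod.ext (Subtype.ext ?_) ?_
        · show ((w : Fin n → ℤ) + s q) - s (W.mkQ ((w : Fin n → ℤ) + s q)) = (w : Fin n → ℤ)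
          rw [h1]; abel
        · exact h1 }
  have heW : ∀ (x : Fin n → ℤ) (hx : x ∈ W), e x = (⟨x, hx⟩, 0) := by
    intro x hx
    have h0 : W.mkQ x = 0 := (Submodule.Quotient.mk_eq_zero W).2 hx
    refine Prod.ext (Subtype.ext ?_) ?_
    · show x - s (W.mkQ x) = x
      rw [h0, map_zero, sub_zero]
    · exact h0
  set r := Module.finrank ℤ W with hr
  set m := Module.finrank ℤ Q with hm
  have hrm : r + m = n := by
    have h1 : Module.finrank ℤ (Fin n → ℤ) = n := by simp
    have h2 : Module.finrank ℤ (W × Q) = r + m := Module.finrank_prod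
    rw [← h1, ← h2]
    exact (LinearEquiv.finrank_eq e).symm
  let bW : Module.Basis (Fin r) ℤ W := Module.finBasis ℤ W
  let bQ : Module.Basis (Fin m) ℤ Q := Module.finBasis ℤ Q
  let b : Module.Basis (Fin r ⊕ Fin m) ℤ (Fin n → ℤ) := (bW.prod bQ).map e.symm
  have hb_repr : ∀ x, b.repr x = (bW.prod bQ).repr (e x) := by
    intro x
    rw [Module.Basis.map_repr]
    simp
  have hbW : ∀ i, (b (Sum.inl i) : Fin n → ℤ) ∈ W := by
    intro i
    have hb1 : b (Sum.inl i) = e.symm (bW.prod bQ (Sum.inl i)) := by simp [b]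
    have h1 : (bW.prod bQ) (Sum.inl i) = ((bW i : W), (0 : Q)) :=
      Prod.ext (Module.Basis.prod_apply_inl_fst _ _ _) (Module.Basis.prod_apply_inl_snd _ _ _)
    rw [hb1, h1]
    have h2 : e ((bW i : W) : Fin n → ℤ) = ((bW i : W), (0:Q)) := heW _ (bW i).2
    rw [← h2, LinearEquiv.symm_apply_apply]
    exact (bW i).2
  have hrepr0 : ∀ x ∈ W, ∀ j, b.repr x (Sum.inr j) = 0 := by
    intro x hx j
    rw [hb_repr, heW x hx, Module.Basis.prod_repr_inr]
    simp
  -- the matrix in the adapted basis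
  let M : Matrix (Fin r ⊕ Fin m) (Fin r ⊕ Fin m) ℤ :=
    LinearMap.toMatrix b b (Matrix.mulVecLin A)
  have hM21 : M.toBlocks₂₁ = 0 := by
    ext j i
    show (LinearMap.toMatrix b b) (Matrix.mulVecLin A) (Sum.inr j) (Sum.inl i) = 0
    rw [LinearMap.toMatrix_apply]
    exact hrepr0 _ (hinv _ (hbW i)) j
  have hMblocks : M = Matrix.fromBlocks M.toBlocks₁₁ M.toBlocks₁₂ 0 M.toBlocks₂₂ := by
    rw [← hM21, Matrix.fromBlocks_toBlocks]
  -- reindexed basis and matrices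
  let ee : (Fin r ⊕ Fin m) ≃ Fin n := finSumFinEquiv.trans (finCongr hrm)
  let b' : Module.Basis (Fin n) ℤ (Fin n → ℤ) := b.reindex ee
  let M' : Matrix (Fin n) (Fin n) ℤ := LinearMap.toMatrix b' b' (Matrix.mulVecLin A)
  have hM' : M' = Matrix.reindex ee ee M := by
    ext i j
    rw [Matrix.reindex_apply, Matrix.submatrix_apply]
    show (LinearMap.toMatrix b' b') (Matrix.mulVecLin A) i j
      = (LinearMap.toMatrix b b) (Matrix.mulVecLin A) (ee.symm i) (ee.symm j)
    rw [LinearMap.toMatrix_apply, LinearMap.toMatrix_apply]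
    have hb' : b' = b.reindex ee := rfl
    rw [hb', Module.Basis.repr_reindex_apply, Module.Basis.coe_reindex]
    rfl
  -- conjugation
  let std : Module.Basis (Fin n) ℤ (Fin n → ℤ) := Pi.basisFun ℤ (Fin n)
  have hA : (std.toMatrix b') * M' * (b'.toMatrix std) = A := by
    rw [show M' = LinearMap.toMatrix b' b' (Matrix.mulVecLin A) from rfl]
    rw [basis_toMatrix_mul_linearMap_toMatrix_mul_basis_toMatrix]
    rw [show std = Pi.basisFun ℤ (Fin n) from rfl, LinearMap.toMatrix_eq_toMatrix']
    rw [← Matrix.toLin'_apply' A, LinearMap.toMatrix'_toLin']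
  let U : GL (Fin n) ℤ :=
    ⟨std.toMatrix b', b'.toMatrix std, Module.Basis.toMatrix_mul_toMatrix_flip _ _,
      Module.Basis.toMatrix_mul_toMatrix_flip _ _⟩
  have hconj : UZ.cls A = UZ.cls M' := by
    rw [← hA]
    exact UZ.cls_conj U M'
  refine ⟨r, m, hrm, M.toBlocks₁₁, M.toBlocks₂₂, rfl, ?_⟩
  rw [hconj, hM']
  have hre : Matrix.reindex ee ee M
      = Matrix.reindex (finCongr hrm) (finCongr hrm)
        (Matrix.reindex finSumFinEquiv finSumFinEquiv M) := by
    ext i j; rfl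
  rw [hre, UZ.cls_reindex]
  calc UZ.cls ((Matrix.reindex finSumFinEquiv finSumFinEquiv) M)
      = UZ.cls ((Matrix.reindex finSumFinEquiv finSumFinEquiv)
          (Matrix.fromBlocks M.toBlocks₁₁ M.toBlocks₁₂ 0 M.toBlocks₂₂)) := by rw [← hMblocks]
    _ = _ := UZ.cls_blocks _ _ _

section Invariant
open Polynomial

noncomputable def castL (n : ℕ) : (Fin n → ℤ) →ₗ[ℤ] (Fin n → ℚ) :=
  LinearMap.compLeft ((Int.castRingHom ℚ).toAddMonoidHom.toIntLinearMap) (Fin n)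

lemma castL_apply {n : ℕ} (x : Fin n → ℤ) (i : Fin n) : castL n x i = (x i : ℚ) := rfl

lemma castL_inj {n : ℕ} {x : Fin n → ℤ} (h : castL n x = 0) : x = 0 := by
  funext i
  have h2 : ((x i : ℚ)) = 0 := congr_fun h i
  have : x i = 0 := by exact_mod_cast h2
  simpa using this

lemma castL_mulVec {n : ℕ} (A : Matrix (Fin n) (Fin n) ℤ) (x : Fin n → ℤ) :
    castL n (A.mulVec x) = (A.map (Int.castRingHom ℚ)).mulVec (castL n x) := by
  funext i
  rw [castL_apply]
  simp only [Matrix.mulVec, dotProduct, Matrix.map_apply, castL_apply]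
  push_cast
  rfl

lemma exists_invariant {n : ℕ} (hn : 1 ≤ n) (A : Matrix (Fin n) (Fin n) ℤ)
    (hred : ¬ Irreducible ((A.charpoly).map (Int.castRingHom ℚ))) :
    ∃ W : Submodule ℤ (Fin n → ℤ),
      (∀ x ∈ W, A.mulVec x ∈ W) ∧
      (∀ (c : ℤ) (x : Fin n → ℤ), c ≠ 0 → c • x ∈ W → x ∈ W) ∧
      1 ≤ Module.finrank ℤ W ∧ Module.finrank ℤ W < n := by
  classical
  set Aq := A.map (Int.castRingHom ℚ) with hAq
  have hcp : (A.charpoly).map (Int.castRingHom ℚ) = Aq.charpoly :=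
    (Matrix.charpoly_map A (Int.castRingHom ℚ)).symm
  rw [hcp] at hred
  have hdeg : Aq.charpoly.natDegree = n := by
    rw [Matrix.charpoly_natDegree_eq_dim, Fintype.card_fin]
  have hcp0 : Aq.charpoly ≠ 0 := (Matrix.charpoly_monic Aq).ne_zero
  have hnotunit : ¬ IsUnit Aq.charpoly := by
    intro h
    have := Polynomial.natDegree_eq_zero_of_isUnit h
    omega
  -- factor the charpoly
  rw [irreducible_iff] at hred
  push_neg at hred
  obtain ⟨f, g, hfg, hfu, hgu⟩ := hred hnotunit
  have hf0 : f ≠ 0 := by rintro rfl; simp at hfg; exact hcp0 hfg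
  have hg0 : g ≠ 0 := by rintro rfl; simp at hfg; exact hcp0 hfg
  have degunit : ∀ h : ℚ[X], h ≠ 0 → h.natDegree = 0 → IsUnit h := by
    intro h h0 hd
    exact Polynomial.isUnit_iff_degree_eq_zero.mpr
      (by rw [Polynomial.degree_eq_natDegree h0, hd]; rfl)
  have hfd : 1 ≤ f.natDegree := by
    by_contra h
    push_neg at h
    exact hfu (degunit f hf0 (by omega))
  have hgd : 1 ≤ g.natDegree := by
    by_contra h
    push_neg at h
    exact hgu (degunit g hg0 (by omega))
  have hsum : f.natDegree + g.natDegree = n := by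
    rw [← hdeg, hfg, Polynomial.natDegree_mul hf0 hg0]
  -- Cayley-Hamilton
  have hCH : (Polynomial.aeval Aq) Aq.charpoly = 0 := Matrix.aeval_self_charpoly Aq
  -- find a nonzero vector killed by a proper-degree polynomial
  have hmain : ∃ (q : ℚ[X]) (v : Fin n → ℚ), v ≠ 0 ∧ q ≠ 0 ∧
      1 ≤ q.natDegree ∧ q.natDegree < n ∧ (Polynomial.aeval Aq q).mulVec v = 0 := by
    by_cases hgA : (Polynomial.aeval Aq) g = 0
    · refine ⟨g, Pi.single ⟨0, hn⟩ 1, ?_, hg0, hgd, by omega, by rw [hgA, Matrix.zero_mulVec]⟩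
      intro h
      have := congr_fun h ⟨0, hn⟩
      simp at this
    · have : ∃ w, ((Polynomial.aeval Aq) g).mulVec w ≠ 0 := by
        by_contra h
        push_neg at h
        apply hgA
        ext i j
        have := congr_fun (h (Pi.single j 1)) i
        rw [Matrix.mulVec_single] at this
        simpa using this
      obtain ⟨w, hw⟩ := this
      refine ⟨f, ((Polynomial.aeval Aq) g).mulVec w, hw, hf0, hfd, by omega, ?_⟩
      rw [Matrix.mulVec_mulVec, ← _root_.map_mul, ← hfg, hCH]
      simp
  obtain ⟨q0, v, hv0, hq00, hq0d, hq0n, hq0v⟩ := hmain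
  -- normalize to a monic polynomial
  set q : ℚ[X] := q0 * Polynomial.C (q0.leadingCoeff)⁻¹ with hqdef
  have hqmonic : q.Monic := Polynomial.monic_mul_leadingCoeff_inv hq00
  have hqd : q.natDegree = q0.natDegree := by
    rw [hqdef, Polynomial.natDegree_mul_leadingCoeff_inv _ hq00]
  have hqv : (Polynomial.aeval Aq q).mulVec v = 0 := by
    rw [hqdef, _root_.map_mul, Polynomial.aeval_C]
    rw [show (algebraMap ℚ (Matrix (Fin n) (Fin n) ℚ)) (q0.leadingCoeff)⁻¹
        = (q0.leadingCoeff)⁻¹ • (1 : Matrix (Fin n) (Fin n) ℚ) by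
      rw [Algebra.algebraMap_eq_smul_one]]
    rw [Matrix.mul_smul, Matrix.mul_one, Matrix.smul_mulVec, hq0v, smul_zero]
  set d := q.natDegree with hd
  have hd1 : 1 ≤ d := by rw [hqd]; exact hq0d
  have hdn : d < n := by rw [hqd]; exact hq0n
  -- the cyclic subspace
  set S : Submodule ℚ (Fin n → ℚ) :=
    Submodule.span ℚ (Set.range fun i : Fin d => (Aq ^ (i : ℕ)).mulVec v) with hS
  have hgen : ∀ (j : ℕ), j < d → (Aq ^ j).mulVec v ∈ S := by
    intro j hj
    exact Submodule.subset_span ⟨⟨j, hj⟩, rfl⟩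
  -- mulVec as a linear map in the matrix variable
  let L : Matrix (Fin n) (Fin n) ℚ →ₗ[ℚ] (Fin n → ℚ) :=
    { toFun := fun M => M.mulVec v
      map_add' := fun M N => Matrix.add_mulVec M N v
      map_smul' := fun c M => Matrix.smul_mulVec c M v }
  -- key relation
  have hkey : (Aq ^ d).mulVec v
      = -(∑ i ∈ Finset.range d, q.coeff i • (Aq ^ i).mulVec v) := by
    have h0 : (Polynomial.aeval Aq q).mulVec v = 0 := hqv
    rw [Polynomial.aeval_eq_sum_range] at h0
    have h1 : (∑ i ∈ Finset.range (d + 1), q.coeff i • Aq ^ i).mulVec v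
        = ∑ i ∈ Finset.range (d + 1), q.coeff i • (Aq ^ i).mulVec v := by
      have := map_sum L (fun i => q.coeff i • Aq ^ i) (Finset.range (d + 1))
      rw [show L (∑ i ∈ Finset.range (d + 1), q.coeff i • Aq ^ i)
          = (∑ i ∈ Finset.range (d + 1), q.coeff i • Aq ^ i).mulVec v from rfl] at this
      rw [this]
      refine Finset.sum_congr rfl fun i _ => ?_
      show (q.coeff i • Aq ^ i).mulVec v = _
      rw [Matrix.smul_mulVec]
    rw [← hd] at h0
    rw [h1, Finset.sum_range_succ] at h0
    rw [show q.coeff d = 1 by rw [hd]; exact hqmonic.coeff_natDegree, one_smul] at h0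
    have h2 := eq_neg_of_add_eq_zero_right h0
    exact h2
  -- invariance of the cyclic subspace
  have hSinv : ∀ x ∈ S, Aq.mulVec x ∈ S := by
    intro x hx
    have hle : Submodule.map (Matrix.mulVecLin Aq) S ≤ S := by
      rw [hS, Submodule.map_span, Submodule.span_le]
      rintro y ⟨z, ⟨i, rfl⟩, rfl⟩
      show Aq.mulVecLin ((Aq ^ (i : ℕ)).mulVec v) ∈ S
      rw [Matrix.mulVecLin_apply, Matrix.mulVec_mulVec, ← pow_succ']
      rcases Nat.lt_or_ge ((i : ℕ) + 1) d with h | h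
      · exact hgen _ h
      · have hi : (i : ℕ) + 1 = d := by omega
        rw [hi, hkey]
        exact Submodule.neg_mem _ (Submodule.sum_mem _ fun j hj =>
          Submodule.smul_mem _ _ (hgen j (Finset.mem_range.1 hj)))
    exact hle ⟨x, hx, rfl⟩
  have hvS : v ∈ S := by
    have := hgen 0 (by omega)
    rwa [pow_zero, Matrix.one_mulVec] at this
  -- the integral submodule
  set W : Submodule ℤ (Fin n → ℤ) :=
    Submodule.comap (castL n) (S.restrictScalars ℤ) with hW
  have hWmem : ∀ x : Fin n → ℤ, x ∈ W ↔ castL n x ∈ S := fun x => Iff.rfl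
  refine ⟨W, ?_, ?_, ?_, ?_⟩
  · intro x hx
    rw [hWmem] at hx ⊢
    rw [castL_mulVec, ← hAq]
    exact hSinv _ hx
  · intro c x hc hcx
    rw [hWmem] at hcx ⊢
    have h1 : castL n (c • x) = (c : ℚ) • castL n x := by
      funext i
      simp only [Pi.smul_apply, castL_apply, smul_eq_mul]
      push_cast
      ring
    rw [h1] at hcx
    have hc' : (c : ℚ) ≠ 0 := Int.cast_ne_zero.2 hc
    have := Submodule.smul_mem S (c : ℚ)⁻¹ hcx
    rwa [smul_smul, inv_mul_cancel₀ hc', one_smul] at this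
  · -- lower bound: clear the denominators of v
    have hvx : ∃ x₀ : Fin n → ℤ, x₀ ≠ 0 ∧ castL n x₀ ∈ S := by
      set N : ℚ := ∏ j, ((v j).den : ℚ) with hN
      have hN0 : N ≠ 0 :=
        Finset.prod_ne_zero_iff.2 fun j _ => Nat.cast_ne_zero.2 (v j).den_nz
      set x₀ : Fin n → ℤ :=
        fun i => (∏ j ∈ Finset.univ.erase i, ((v j).den : ℤ)) * (v i).num with hx₀
      have hcast : ∀ i, ((x₀ i : ℤ) : ℚ) = N * v i := by
        intro i
        have h1 : N = ((v i).den : ℚ) * ∏ j ∈ Finset.univ.erase i, ((v j).den : ℚ) :=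
          (Finset.mul_prod_erase Finset.univ _ (Finset.mem_univ i)).symm
        have h2 : v i * ((v i).den : ℚ) = ((v i).num : ℚ) := Rat.mul_den_eq_num (v i)
        rw [hx₀]
        push_cast
        rw [h1]
        rw [← h2]
        ring
      obtain ⟨i0, hi0⟩ : ∃ i, v i ≠ 0 := by
        by_contra h
        push_neg at h
        exact hv0 (funext h)
      refine ⟨x₀, ?_, ?_⟩
      · intro h
        have hcomp : ((x₀ i0 : ℤ) : ℚ) = 0 := by rw [h]; simp
        rw [hcast i0] at hcomp
        exact (mul_ne_zero hN0 hi0) hcomp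
      · have h3 : castL n x₀ = N • v := by
          funext i
          rw [castL_apply, hcast i]
          rfl
        rw [h3]
        exact Submodule.smul_mem S N hvS
    obtain ⟨x₀, hx₀0, hx₀S⟩ := hvx
    have : Nontrivial W := by
      refine ⟨⟨x₀, hx₀S⟩, 0, ?_⟩
      intro h
      exact hx₀0 (by simpa using congr_arg (Subtype.val) h)
    have := Module.finrank_pos_iff (R := ℤ) (M := W) |>.2 this
    omega
  · -- upper bound via the rational span
    have hfinS : Module.finrank ℚ S ≤ d := by
      have h1 := finrank_range_le_card (R := ℚ) (fun i : Fin d => (Aq ^ (i : ℕ)).mulVec v)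
      rw [Fintype.card_fin] at h1
      exact le_trans (le_of_eq rfl) h1
    have hWS : Module.finrank ℤ W ≤ Module.finrank ℚ S := by
      set bw : Module.Basis (Fin (Module.finrank ℤ W)) ℤ W := Module.finBasis ℤ W with hbw
      set u : Fin (Module.finrank ℤ W) → (Fin n → ℚ) :=
        fun i => castL n ((bw i : W) : Fin n → ℤ) with hu
      have hliZ : LinearIndependent ℤ u := by
        have h1 : LinearIndependent ℤ (fun i => ((bw i : W) : Fin n → ℤ)) :=
          bw.linearIndependent.map' W.subtype (Submodule.ker_subtype W)
        exact h1.map' (castL n) (LinearMap.ker_eq_bot'.2 fun m hm => castL_inj hm)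
      have hliQ : LinearIndependent ℚ u := (LinearIndependent.iff_fractionRing ℤ ℚ).1 hliZ
      have hrange : Set.range u ⊆ (S : Set (Fin n → ℚ)) := by
        rintro y ⟨i, rfl⟩
        exact (bw i).2
      have h2 : Submodule.span ℚ (Set.range u) ≤ S := Submodule.span_le.2 hrange
      have h3 := Submodule.finrank_mono h2
      rw [finrank_span_eq_card hliQ, Fintype.card_fin] at h3
      exact h3
    omega

end Invariant

lemma UZ.cls_list_decomp : ∀ (n : ℕ) (A : Matrix (Fin n) (Fin n) ℤ),
    ∃ L : List MatIdx,
      (∀ p ∈ L, 1 ≤ p.1 ∧ Irreducible ((Matrix.charpoly p.2).map (Int.castRingHom ℚ))) ∧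
      UZ.cls A = (L.map fun p => UZ.cls p.2).sum := by
  intro n
  induction n using Nat.strong_induction_on with
  | _ n ih =>
    intro A
    by_cases hn : n = 0
    · subst hn
      exact ⟨[], by simp, by rw [UZ.cls_zero_dim]; simp⟩
    by_cases hirr : Irreducible ((A.charpoly).map (Int.castRingHom ℚ))
    · refine ⟨[⟨n, A⟩], ?_, by simp⟩
      intro p hp
      rw [List.mem_singleton] at hp
      subst hp
      exact ⟨by show 1 ≤ n; omega, hirr⟩
    · obtain ⟨W, hinv, hsat, hr1, hrn⟩ := exists_invariant (by omega) A hirr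
      obtain ⟨r, m, hrm, B, D, hrW, hBD⟩ := UZ.cls_eq_of_invariant A W hinv hsat
      obtain ⟨L1, hL1, hB⟩ := ih r (by omega) B
      obtain ⟨L2, hL2, hD⟩ := ih m (by omega) D
      refine ⟨L1 ++ L2, ?_, ?_⟩
      · intro p hp
        rcases List.mem_append.1 hp with h | h
        exacts [hL1 p h, hL2 p h]
      · rw [hBD, hB, hD, List.map_append, List.sum_append]

/-- Every class `[A]` in `U(ℤ)` is a finite sum of classes of integer matrices whose
characteristic polynomials are irreducible over `ℚ`. -/
theorem UZ_cls_eq_sum_irreducible {n : ℕ} (A : Matrix (Fin n) (Fin n) ℤ) :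
    ∃ (k : ℕ) (d : Fin k → ℕ) (_ : ∀ i, 1 ≤ d i)
      (M : ∀ i : Fin k, Matrix (Fin (d i)) (Fin (d i)) ℤ),
      (∀ i, Irreducible ((Matrix.charpoly (M i)).map (Int.castRingHom ℚ))) ∧
      UZ.cls A = ∑ i : Fin k, UZ.cls (M i) := by
  obtain ⟨L, hL, hsum⟩ := UZ.cls_list_decomp n A
  refine ⟨L.length, fun i => (L.get i).1, fun i => (hL _ (L.get_mem i)).1,
    fun i => (L.get i).2, fun i => (hL _ (L.get_mem i)).2, ?_⟩
  rw [hsum]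
  have h1 : L.map (fun p => UZ.cls p.2) = List.ofFn (fun i => UZ.cls (L.get i).2) := by
    conv_lhs => rw [← List.ofFn_get L]
    rw [List.map_ofFn]
    rfl
  rw [h1, List.sum_ofFn]
end

section
/- Let X and Y be topological spaces, and let f : X → X, g : Y → Y, α : X → Y, β : Y → X be continuous maps satisfying α ∘ f = g ∘ α and β ∘ g = f ∘ β. Assume there is a continuous homotopy K : X × [0,1] → X with K(x,0) = x and K(x,1) = β(α(x)) for all x, satisfying K(f x, t) = f(K(x,t)) for all x and t, and similarly a continuous homotopy K' : Y × [0,1] → Y with K'(y,0) = y and K'(y,1) = α(β(y)) for all y, satisfying K'(g y, t) = g(K'(y,t)) for all y and t. Then α maps Fix(f) into Fix(g), it preserves the fixed point class relation (if x, x' ∈ Fix(f) lie in the same fixed point class of f, then α(x), α(x') lie in the same fixed point class of g), and the induced map Fix^c(f) → Fix^c(g), [x] ↦ [α(x)], is a bijection. -/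
/-!
A semiconjugacy `α` carries paths witnessing the fixed point class relation of `f` to such
paths for `g`, so it induces a map on fixed point classes, and so does `β`. For a fixed point
`x`, the track `t ↦ K (x, t)` of the equivariant homotopy consists of fixed points of `f`, so it
is a path from `x` to `β (α x)` that `f` leaves unchanged: it witnesses that `x` and `β (α x)`
lie in the same class. With `K'` in the same role, the two induced maps are mutually inverse.
-/

/-- The fixed point class relation on the fixed points of `f`: two fixed points `a` and `b`
are related iff there is a path `p` from `a` to `b` with `p` homotopic (rel endpoints)
to `f ∘ p`. -/
def FixRel {X : Type*} [TopologicalSpace X] (f : C(X, X))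
    (a b : {x : X // f x = x}) : Prop :=
  ∃ p : Path a.1 b.1,
    Path.Homotopic p ((p.map f.continuous).cast a.2.symm b.2.symm)

namespace FixRel

variable {X Y : Type*} [TopologicalSpace X] [TopologicalSpace Y] {f : C(X, X)} {g : C(Y, Y)}

lemma map (α : C(X, Y)) (hα : Function.Semiconj α f g) {a b : {x : X // f x = x}}
    (hab : FixRel f a b) (ha : g (α a) = α a) (hb : g (α b) = α b) :
    FixRel g ⟨α a, ha⟩ ⟨α b, hb⟩ := by
  obtain ⟨p, hp⟩ := hab
  refine ⟨p.map α.continuous, ?_⟩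
  have hcomm : ((p.map f.continuous).cast a.2.symm b.2.symm).map α.continuous
      = ((p.map α.continuous).map g.continuous).cast ha.symm hb.symm :=
    Path.ext (funext fun t => hα (p t))
  simpa only [hcomm] using hp.map α

lemma of_equivariant_homotopy {r : X → X} (K : C(X × unitInterval, X))
    (hK0 : ∀ x, K (x, 0) = x) (hK1 : ∀ x, K (x, 1) = r x)
    (hKf : ∀ x t, K (f x, t) = f (K (x, t)))
    (a : {x : X // f x = x}) (hr : f (r a) = r a) :
    FixRel f a ⟨r a, hr⟩ := by
  let track : Path a.1 (r a) := ⟨⟨fun t => K (a, t), by fun_prop⟩, hK0 a, hK1 a⟩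
  have track_fixed : (track.map f.continuous).cast a.2.symm hr.symm = track :=
    Path.ext (funext fun t => by
      change f (K (a, t)) = K (a, t)
      rw [← hKf, a.2])
  exact ⟨track, by rw [track_fixed]⟩

def classMap (α : C(X, Y)) (hα : Function.Semiconj α f g) :
    Quot (FixRel f) → Quot (FixRel g) :=
  Quot.map (fun a => ⟨α a, Function.IsFixedPt.map a.2 hα⟩) fun _ _ hab => hab.map α hα _ _

lemma classMap_classMap_of_equivariant_homotopy (α : C(X, Y)) (β : C(Y, X))
    (hα : Function.Semiconj α f g) (hβ : Function.Semiconj β g f)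
    (K : C(X × unitInterval, X))
    (hK0 : ∀ x, K (x, 0) = x) (hK1 : ∀ x, K (x, 1) = β (α x))
    (hKf : ∀ x t, K (f x, t) = f (K (x, t))) (q : Quot (FixRel f)) :
    classMap β hβ (classMap α hα q) = q := by
  induction q using Quot.ind with
  | mk a => exact (Quot.sound (of_equivariant_homotopy K hK0 hK1 hKf a _)).symm

end FixRel

open FixRel in
/-- If `α : (X, f) → (Y, g)` admits a homotopy inverse `β` through morphisms of
endomorphisms (witnessed by the equivariant homotopies `K` and `K'`), then `α` maps fixed
points of `f` to fixed points of `g`, preserves the fixed point class relation, and the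
induced map on fixed point classes `Fix^c(f) → Fix^c(g)`, `[x] ↦ [α x]`, is a bijection. -/
theorem fixedPointClasses_bijection {X Y : Type*} [TopologicalSpace X] [TopologicalSpace Y]
    (f : C(X, X)) (g : C(Y, Y)) (α : C(X, Y)) (β : C(Y, X))
    (hα : ∀ x, α (f x) = g (α x)) (hβ : ∀ y, β (g y) = f (β y))
    (K : C(X × unitInterval, X))
    (hK0 : ∀ x, K (x, 0) = x) (hK1 : ∀ x, K (x, 1) = β (α x))
    (hKf : ∀ x t, K (f x, t) = f (K (x, t)))
    (K' : C(Y × unitInterval, Y))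
    (hK'0 : ∀ y, K' (y, 0) = y) (hK'1 : ∀ y, K' (y, 1) = α (β y))
    (hK'g : ∀ y t, K' (g y, t) = g (K' (y, t))) :
    (∀ x : X, f x = x → g (α x) = α x) ∧
    (∀ (x x' : X) (hx : f x = x) (hx' : f x' = x'),
        FixRel f ⟨x, hx⟩ ⟨x', hx'⟩ →
        ∀ (h1 : g (α x) = α x) (h2 : g (α x') = α x'),
          FixRel g ⟨α x, h1⟩ ⟨α x', h2⟩) ∧
    (∀ F : Quot (FixRel f) → Quot (FixRel g),
        (∀ (a : {x : X // f x = x}) (ha : g (α a.1) = α a.1),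
            F (Quot.mk _ a) = Quot.mk _ ⟨α a.1, ha⟩) →
        Function.Bijective F) := by
  refine ⟨fun _ hx => Function.IsFixedPt.map hx hα, fun _ _ _ _ hxx' => hxx'.map α hα, ?_⟩
  intro F hF
  obtain rfl : F = classMap α hα := funext (Quot.ind fun a => hF a _)
  exact Function.bijective_iff_has_inverse.mpr ⟨classMap β hβ,
    classMap_classMap_of_equivariant_homotopy α β hα hβ K hK0 hK1 hKf,
    classMap_classMap_of_equivariant_homotopy β α hβ hα K' hK'0 hK'1 hK'g⟩
end

section
/- Let X and Y be topological spaces, f : X → X and g : Y → Y continuous maps, and H : X × [0,1] → Y a continuous homotopy such that H(f x, t) = g(H(x, t)) for all x ∈ X and t ∈ [0,1]; write α₀ = H(·,0) and α₁ = H(·,1). Let λ : [0,1] → X be a continuous map with λ(1) = f(λ(0)) (an element of the twisted path space L_f X). Then the two points α₀ ∘ λ and α₁ ∘ λ of the twisted path space L_g Y lie in the same path component of L_g Y, i.e., they are joined by a path in L_g Y. -/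
/-- The twisted path space `L_h Z` of an endomorphism `h : Z → Z`: continuous paths
`p : [0,1] → Z` (with the compact-open topology) satisfying `p 1 = h (p 0)`. -/
def TwistedPathSpace {Z : Type*} [TopologicalSpace Z] (h : C(Z, Z)) : Type _ :=
  {p : C(unitInterval, Z) // p 1 = h (p 0)}

instance {Z : Type*} [TopologicalSpace Z] (h : C(Z, Z)) :
    TopologicalSpace (TwistedPathSpace h) :=
  instTopologicalSpaceSubtype

/-- Let `H` be a homotopy with `H (f x, t) = g (H (x, t))`, and write `α₀ = H(·,0)`,
`α₁ = H(·,1)`. For any `lam ∈ L_f X` (i.e. `lam 1 = f (lam 0)`), the two elements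
`α₀ ∘ lam` and `α₁ ∘ lam` of the twisted path space `L_g Y` are joined by a path in
`L_g Y`. -/
theorem twistedPath_joined {X Y : Type*} [TopologicalSpace X] [TopologicalSpace Y]
    (f : C(X, X)) (g : C(Y, Y)) (H : C(X × unitInterval, Y))
    (hH : ∀ x t, H (f x, t) = g (H (x, t)))
    (lam : C(unitInterval, X)) (hlam : lam 1 = f (lam 0)) :
    Joined
      (⟨⟨fun t => H (lam t, 0),
          H.continuous.comp ((lam.continuous).prodMk continuous_const)⟩, by
        simp only [ContinuousMap.coe_mk]
        rw [hlam]; exact hH _ _⟩ : TwistedPathSpace g)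
      (⟨⟨fun t => H (lam t, 1),
          H.continuous.comp ((lam.continuous).prodMk continuous_const)⟩, by
        simp only [ContinuousMap.coe_mk]
        rw [hlam]; exact hH _ _⟩ : TwistedPathSpace g) := by
  let F : C(unitInterval × unitInterval, Y) :=
    ⟨fun p => H (lam p.2, p.1),
      H.continuous.comp ((lam.continuous.comp continuous_snd).prodMk continuous_fst)⟩
  refine ⟨⟨⟨fun s => ⟨F.curry s, ?_⟩, ?_⟩, ?_, ?_⟩⟩
  · show H (lam 1, s) = g (H (lam 0, s))
    rw [hlam]; exact hH _ _
  · exact Continuous.subtype_mk F.curry.continuous _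
  all_goals
    apply Subtype.ext
    ext t
    rfl
end
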